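/- arXiv:1709.05284 — 2 statements merged into one kernel-verified Lean document; each statement's English description precedes it below -/
import Mathlib

section
/- Let n ≥ 1, 0 < r ≤ R, and let E ⊆ ℝⁿ be a measurable set with bounded topological boundary and |E| = |B_R|. Then |E ⊖ B_r| ≤ |B_{R−r}|. -/
open MeasureTheory Metric Set Filter Bornology
open scoped ENNReal NNReal Pointwise

noncomputable section

/-- The set of points of Lebesgue density one of `E ⊆ ℝⁿ`. -/
def densityOnePoints (n : ℕ) (E : Set (EuclideanSpace ℝ (Fin n))) :
    Set (EuclideanSpace ℝ (Fin n)) :=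
  {x | Tendsto (fun ρ : ℝ => volume (E ∩ ball x ρ) / volume (ball x ρ))
        (nhdsWithin 0 (Ioi 0)) (nhds 1)}

/-- Minkowski sum `A ⊕ B_r = ⋃_{x ∈ A} B_r(x)`. -/
def minkSum (n : ℕ) (r : ℝ) (A : Set (EuclideanSpace ℝ (Fin n))) :
    Set (EuclideanSpace ℝ (Fin n)) :=
  ⋃ x ∈ A, ball x r

/-- The nonlocal Minkowski perimeter `Per_r(E) = (1/(2r)) |(∂E) ⊕ B_r|`, where `∂E`
is the topological boundary of the density-one representative of `E`. -/
def perR (n : ℕ) (r : ℝ) (E : Set (EuclideanSpace ℝ (Fin n))) : ℝ≥0∞ :=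
  volume (minkSum n r (frontier (densityOnePoints n E))) / ENNReal.ofReal (2 * r)

/-- The inner set `E ⊖ B_r = E \ ((∂E) ⊕ B_r)` (for the density-one representative). -/
def minkSub (n : ℕ) (r : ℝ) (E : Set (EuclideanSpace ℝ (Fin n))) :
    Set (EuclideanSpace ℝ (Fin n)) :=
  densityOnePoints n E \ minkSum n r (frontier (densityOnePoints n E))

/-- The Riesz energy `Φ_α(E) = ∫_E ∫_E |x-y|^{-α} dx dy`. -/
def rieszEnergy (n : ℕ) (α : ℝ) (E : Set (EuclideanSpace ℝ (Fin n))) : ℝ≥0∞ :=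
  ∫⁻ x in E, ∫⁻ y in E, edist x y ^ (-α)

/-- The radius of the ball in `ℝⁿ` with unit volume. -/
def unitRadius (n : ℕ) : ℝ :=
  (volume (ball (0 : EuclideanSpace ℝ (Fin n)) 1)).toReal ^ (-(n : ℝ)⁻¹)

/-- A rigid motion of `ℝⁿ`: a rotation followed by a translation. -/
def IsRigidMotion (n : ℕ) (g : EuclideanSpace ℝ (Fin n) → EuclideanSpace ℝ (Fin n)) : Prop :=
  ∃ (R : EuclideanSpace ℝ (Fin n) ≃ₗᵢ[ℝ] EuclideanSpace ℝ (Fin n))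
    (v : EuclideanSpace ℝ (Fin n)),
    LinearMap.det (R.toLinearEquiv : EuclideanSpace ℝ (Fin n) →ₗ[ℝ] EuclideanSpace ℝ (Fin n)) = 1 ∧
    ∀ x, g x = R x + v



section BrunnMinkowskiAux

lemma sumset_compact (K L : Set ℝ) (hK : IsCompact K) (hL : IsCompact L)
    (hKne : K.Nonempty) (hLne : L.Nonempty) :
    volume K + volume L ≤ volume (K + L) := by
  set c := sSup K with hc
  set d := sInf L with hd
  have hcK : c ∈ K := hK.sSup_mem hKne
  have hdL : d ∈ L := hL.sInf_mem hLne
  set A := c +ᵥ L with hA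
  set B := d +ᵥ K with hB
  have hAsub : A ⊆ K + L := by
    rintro x ⟨l, hl, rfl⟩
    exact ⟨c, hcK, l, hl, rfl⟩
  have hBsub : B ⊆ K + L := by
    rintro x ⟨k, hk, rfl⟩
    exact ⟨k, hk, d, hdL, add_comm k d⟩
  have hAc : IsCompact A := hL.image (continuous_add_left c)
  have hBc : IsCompact B := hK.image (continuous_add_left d)
  have hAm : MeasurableSet A := hAc.measurableSet
  have hBm : MeasurableSet B := hBc.measurableSet
  have hinter : B ∩ A ⊆ {c + d} := by
    rintro x ⟨⟨k, hk, rfl⟩, ⟨l, hl, hx⟩⟩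
    have h1 : d ≤ l := csInf_le hL.bddBelow hl
    have h2 : k ≤ c := le_csSup hK.bddAbove hk
    have hx' : c + l = d + k := hx
    show d + k = c + d
    linarith
  have hinter0 : volume (B ∩ A) = 0 :=
    measure_mono_null hinter (measure_singleton _)
  have hBdiff : volume (B \ A) = volume B := by
    have := measure_diff_add_inter B hAm (μ := volume)
    rw [hinter0, add_zero] at this
    exact this
  have hunion : volume A + volume B ≤ volume (K + L) := by
    have hdisj : Disjoint A (B \ A) := disjoint_sdiff_right
    have := measure_union hdisj (hBm.diff hAm) (μ := volume)
    calc volume A + volume B = volume A + volume (B \ A) := by rw [hBdiff]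
      _ = volume (A ∪ (B \ A)) := (this).symm
      _ ≤ volume (K + L) := measure_mono (union_subset hAsub fun x hx => hBsub hx.1)
  have hvA : volume A = volume L := measure_vadd _ _ _
  have hvB : volume B = volume K := measure_vadd _ _ _
  rw [← hvA, ← hvB, add_comm]
  exact hunion

lemma sumset_meas (U V : Set ℝ) (hU : MeasurableSet U) (hV : MeasurableSet V)
    (hUne : U.Nonempty) (hVne : V.Nonempty) :
    volume U + volume V ≤ volume (U + V) := by
  obtain ⟨u, hu⟩ := hUne
  obtain ⟨v, hv⟩ := hVne
  by_cases hT : volume (U + V) = ∞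
  · rw [hT]; exact le_top
  have hUfin : volume U ≠ ∞ := by
    have hsub : v +ᵥ U ⊆ U + V := by
      rintro x ⟨y, hy, rfl⟩; exact ⟨y, hy, v, hv, add_comm y v⟩
    have : volume U ≤ volume (U + V) := by
      rw [← measure_vadd (volume) v U]; exact measure_mono hsub
    exact ne_top_of_le_ne_top hT this
  have hVfin : volume V ≠ ∞ := by
    have hsub : u +ᵥ V ⊆ U + V := by
      rintro x ⟨y, hy, rfl⟩; exact ⟨u, hu, y, hy, rfl⟩
    have : volume V ≤ volume (U + V) := by
      rw [← measure_vadd (volume) u V]; exact measure_mono hsub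
    exact ne_top_of_le_ne_top hT this
  apply ENNReal.le_of_forall_pos_le_add
  intro ε hε _
  have hε2 : ((ε : ℝ≥0∞) / 2) ≠ 0 := by
    simp [ENNReal.div_eq_zero_iff, hε.ne']
  obtain ⟨K, hKU, hKc, hKlt⟩ := hU.exists_isCompact_lt_add hUfin hε2
  obtain ⟨L, hLV, hLc, hLlt⟩ := hV.exists_isCompact_lt_add hVfin hε2
  have hK'c : IsCompact (insert u K) := hKc.insert u
  have hL'c : IsCompact (insert v L) := hLc.insert v
  have hK'U : insert u K ⊆ U := insert_subset hu hKU
  have hL'V : insert v L ⊆ V := insert_subset hv hLV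
  have key := sumset_compact _ _ hK'c hL'c ⟨u, mem_insert _ _⟩ ⟨v, mem_insert _ _⟩
  calc volume U + volume V
      ≤ (volume K + ε/2) + (volume L + ε/2) := add_le_add hKlt.le hLlt.le
    _ = volume K + volume L + ((ε : ℝ≥0∞)/2 + (ε : ℝ≥0∞)/2) := by ring
    _ = volume K + volume L + ε := by rw [ENNReal.add_halves]
    _ ≤ volume (insert u K) + volume (insert v L) + ε := by
        gcongr <;> exact subset_insert _ _
    _ ≤ volume (insert u K + insert v L) + ε := by gcongr
    _ ≤ volume (U + V) + ε :=
        add_le_add_left (measure_mono (add_subset_add hK'U hL'V)) ε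

lemma ennreal_am_gm {t : ℝ} (ht : 0 < t) (ht' : t < 1) (x y : ℝ≥0∞) :
    x ^ (1 - t) * y ^ t ≤ ENNReal.ofReal (1 - t) * x + ENNReal.ofReal t * y := by
  have h1t : 0 < 1 - t := by linarith
  rcases eq_or_ne x ∞ with hx | hx
  · rcases eq_or_ne y 0 with hy | hy
    · subst hy
      rw [ENNReal.zero_rpow_of_pos ht, mul_zero]
      exact zero_le
    · have : ENNReal.ofReal (1 - t) * x = ∞ := by
        rw [hx, ENNReal.mul_top]
        simp [ENNReal.ofReal_eq_zero, not_le]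
        linarith
      rw [this, top_add]
      exact le_top
  rcases eq_or_ne y ∞ with hy | hy
  · rcases eq_or_ne x 0 with hx0 | hx0
    · subst hx0
      rw [ENNReal.zero_rpow_of_pos h1t, zero_mul]
      exact zero_le
    · have : ENNReal.ofReal t * y = ∞ := by
        rw [hy, ENNReal.mul_top]
        simp [ENNReal.ofReal_eq_zero, not_le, ht]
      rw [this, add_top]
      exact le_top
  -- finite case
  lift x to ℝ≥0 using hx
  lift y to ℝ≥0 using hy
  have key := NNReal.geom_mean_le_arith_mean2_weighted (w₁ := Real.toNNReal (1 - t))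
    (w₂ := Real.toNNReal t) (p₁ := x) (p₂ := y) ?_
  · have e1 : ((Real.toNNReal (1 - t) : ℝ≥0) : ℝ) = 1 - t := Real.coe_toNNReal _ h1t.le
    have e2 : ((Real.toNNReal t : ℝ≥0) : ℝ) = t := Real.coe_toNNReal _ ht.le
    rw [e1, e2] at key
    calc (x : ℝ≥0∞) ^ (1 - t) * (y : ℝ≥0∞) ^ t
        = ((x ^ (1 - t) * y ^ t : ℝ≥0) : ℝ≥0∞) := by
          rw [ENNReal.coe_mul, ENNReal.coe_rpow_of_nonneg _ h1t.le,
            ENNReal.coe_rpow_of_nonneg _ ht.le]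
      _ ≤ ((Real.toNNReal (1 - t) * x + Real.toNNReal t * y : ℝ≥0) : ℝ≥0∞) := by
          exact_mod_cast ENNReal.coe_le_coe.2 key
      _ = ENNReal.ofReal (1 - t) * x + ENNReal.ofReal t * y := by
          rw [ENNReal.coe_add, ENNReal.coe_mul, ENNReal.coe_mul]
          rfl
  · ext
    push_cast [Real.coe_toNNReal _ h1t.le, Real.coe_toNNReal _ ht.le]
    ring

lemma sumset_smul (a b : ℝ) (ha : 0 < a) (hb : 0 < b) (U V W : Set ℝ)
    (hU : MeasurableSet U) (hV : MeasurableSet V)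
    (hUne : U.Nonempty) (hVne : V.Nonempty) (hW : a • U + b • V ⊆ W) :
    ENNReal.ofReal a * volume U + ENNReal.ofReal b * volume V ≤ volume W := by
  have haU : MeasurableSet (a • U) := by
    simpa using hU.const_smul₀ a
  have hbV : MeasurableSet (b • V) := by
    simpa using hV.const_smul₀ b
  have h1 := sumset_meas (a • U) (b • V) haU hbV (hUne.smul_set) (hVne.smul_set)
  have hvolU : volume (a • U) = ENNReal.ofReal a * volume U := by
    rw [Measure.addHaar_smul]
    congr 1
    simp [abs_of_pos ha]
  have hvolV : volume (b • V) = ENNReal.ofReal b * volume V := by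
    rw [Measure.addHaar_smul]
    congr 1
    simp [abs_of_pos hb]
  rw [← hvolU, ← hvolV]
  exact h1.trans (measure_mono hW)

/-- Layer cake for functions bounded by 1. -/
lemma layercake_le_one (φ : ℝ → ℝ≥0∞) (hφ : Measurable φ) (hb : ∀ a, φ a ≤ 1) :
    ∫⁻ a, φ a = ∫⁻ s in Ioi (0:ℝ), volume {a | ENNReal.ofReal s < φ a} := by
  have hne : ∀ a, φ a ≠ ∞ := fun a => ne_top_of_le_ne_top ENNReal.one_ne_top (hb a)
  have h1 : ∀ a, ENNReal.ofReal ((φ a).toReal) = φ a := fun a => ENNReal.ofReal_toReal (hne a)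
  have key := lintegral_eq_lintegral_meas_lt (volume : Measure ℝ)
    (f := fun a => (φ a).toReal) (Eventually.of_forall fun a => ENNReal.toReal_nonneg)
    (hφ.ennreal_toReal.aemeasurable)
  simp_rw [h1] at key
  rw [key]
  apply setLIntegral_congr_fun measurableSet_Ioi
  intro s hs
  refine congrArg volume ?_
  ext a
  simp only [mem_setOf_eq]
  rw [ENNReal.ofReal_lt_iff_lt_toReal (le_of_lt hs) (hne a)]

lemma pl_dim1_core {t : ℝ} (ht : 0 < t) (ht' : t < 1)
    (F G H : ℝ → ℝ≥0∞) (hF : Measurable F) (hG : Measurable G) (hH : Measurable H)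
    (hF1 : ⨆ a, F a = 1) (hG1 : ⨆ a, G a = 1)
    (hyp : ∀ a b, F a ^ (1 - t) * G b ^ t ≤ H ((1 - t) * a + t * b)) :
    ENNReal.ofReal (1 - t) * (∫⁻ a, F a) + ENNReal.ofReal t * (∫⁻ a, G a) ≤ ∫⁻ a, H a := by
  have h1t : 0 < 1 - t := by linarith
  have hFle : ∀ a, F a ≤ 1 := fun a => le_trans (le_iSup F a) hF1.le
  have hGle : ∀ a, G a ≤ 1 := fun a => le_trans (le_iSup G a) hG1.le
  set Hm : ℝ → ℝ≥0∞ := fun a => min (H a) 1 with hHmdef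
  have hHm : Measurable Hm := hH.min measurable_const
  have hHmle : ∀ a, Hm a ≤ 1 := fun a => min_le_right _ _
  -- the three tail-measure functions
  set u : ℝ → ℝ≥0∞ := fun s => volume {a | ENNReal.ofReal s < F a} with hu
  set v : ℝ → ℝ≥0∞ := fun s => volume {a | ENNReal.ofReal s < G a} with hv
  set w : ℝ → ℝ≥0∞ := fun s => volume {a | ENNReal.ofReal s < Hm a} with hw
  have hu_anti : Antitone u := by
    intro s s' hss'
    exact measure_mono fun a ha => lt_of_le_of_lt (ENNReal.ofReal_le_ofReal hss') ha
  have hv_anti : Antitone v := by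
    intro s s' hss'
    exact measure_mono fun a ha => lt_of_le_of_lt (ENNReal.ofReal_le_ofReal hss') ha
  have hu_meas : Measurable u := hu_anti.measurable
  have hv_meas : Measurable v := hv_anti.measurable
  -- pointwise inequality on Ioi 0
  have key : ∀ s : ℝ, 0 < s →
      ENNReal.ofReal (1 - t) * u s + ENNReal.ofReal t * v s ≤ w s := by
    intro s hs
    by_cases hs1 : 1 ≤ s
    · have hUe : {a | ENNReal.ofReal s < F a} = ∅ := by
        ext a
        simp only [mem_setOf_eq, mem_empty_iff_false, iff_false, not_lt]
        exact (hFle a).trans (ENNReal.one_le_ofReal.2 hs1)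
      have hVe : {a | ENNReal.ofReal s < G a} = ∅ := by
        ext a
        simp only [mem_setOf_eq, mem_empty_iff_false, iff_false, not_lt]
        exact (hGle a).trans (ENNReal.one_le_ofReal.2 hs1)
      simp [hu, hv, hUe, hVe]
    · push_neg at hs1
      have hsofr : ENNReal.ofReal s < 1 := by
        rw [← ENNReal.ofReal_one]
        exact ENNReal.ofReal_lt_ofReal_iff_of_nonneg hs.le |>.2 hs1
      have hs0 : ENNReal.ofReal s ≠ 0 := by simp [hs]
      have hstop : ENNReal.ofReal s ≠ ∞ := ENNReal.ofReal_ne_top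
      have hUne : {a | ENNReal.ofReal s < F a}.Nonempty := by
        have : ENNReal.ofReal s < ⨆ a, F a := hF1 ▸ hsofr
        obtain ⟨a, ha⟩ := lt_iSup_iff.1 this
        exact ⟨a, ha⟩
      have hVne : {a | ENNReal.ofReal s < G a}.Nonempty := by
        have : ENNReal.ofReal s < ⨆ a, G a := hG1 ▸ hsofr
        obtain ⟨a, ha⟩ := lt_iSup_iff.1 this
        exact ⟨a, ha⟩
      have hUm : MeasurableSet {a | ENNReal.ofReal s < F a} :=
        hF measurableSet_Ioi
      have hVm : MeasurableSet {a | ENNReal.ofReal s < G a} :=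
        hG measurableSet_Ioi
      apply sumset_smul (1 - t) t h1t ht _ _ _ hUm hVm hUne hVne
      rintro x ⟨y, ⟨a, ha, rfl⟩, z, ⟨b, hb, rfl⟩, rfl⟩
      show ENNReal.ofReal s < Hm ((1 - t) • a + t • b)
      have hstep : ENNReal.ofReal s < H ((1 - t) * a + t * b) := by
        have e1 : ENNReal.ofReal s = ENNReal.ofReal s ^ (1 - t) * ENNReal.ofReal s ^ t := by
          rw [← ENNReal.rpow_add _ _ hs0 hstop]
          norm_num
        rw [e1]
        calc ENNReal.ofReal s ^ (1-t) * ENNReal.ofReal s ^ t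
            < F a ^ (1-t) * G b ^ t :=
              ENNReal.mul_lt_mul (ENNReal.rpow_lt_rpow ha h1t) (ENNReal.rpow_lt_rpow hb ht)
          _ ≤ H ((1 - t) * a + t * b) := hyp a b
      exact lt_min hstep hsofr
  -- integrate
  have int_le : ∫⁻ s in Ioi (0:ℝ), (ENNReal.ofReal (1 - t) * u s + ENNReal.ofReal t * v s)
      ≤ ∫⁻ s in Ioi (0:ℝ), w s := by
    apply lintegral_mono_ae
    filter_upwards [ae_restrict_mem measurableSet_Ioi] with s hs
    exact key s hs
  have int_split : ∫⁻ s in Ioi (0:ℝ), (ENNReal.ofReal (1 - t) * u s + ENNReal.ofReal t * v s)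
      = ENNReal.ofReal (1 - t) * (∫⁻ s in Ioi (0:ℝ), u s)
        + ENNReal.ofReal t * (∫⁻ s in Ioi (0:ℝ), v s) := by
    rw [lintegral_add_left (hu_meas.const_mul _), lintegral_const_mul _ hu_meas,
      lintegral_const_mul _ hv_meas]
  have hFint : ∫⁻ a, F a = ∫⁻ s in Ioi (0:ℝ), u s := layercake_le_one F hF hFle
  have hGint : ∫⁻ a, G a = ∫⁻ s in Ioi (0:ℝ), v s := layercake_le_one G hG hGle
  calc ENNReal.ofReal (1 - t) * (∫⁻ a, F a) + ENNReal.ofReal t * (∫⁻ a, G a)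
      = ENNReal.ofReal (1 - t) * (∫⁻ s in Ioi (0:ℝ), u s)
        + ENNReal.ofReal t * (∫⁻ s in Ioi (0:ℝ), v s) := by
        rw [hFint, hGint]
    _ = ∫⁻ s in Ioi (0:ℝ), (ENNReal.ofReal (1 - t) * u s + ENNReal.ofReal t * v s) :=
        int_split.symm
    _ ≤ ∫⁻ s in Ioi (0:ℝ), w s := int_le
    _ = ∫⁻ a, Hm a := (layercake_le_one Hm hHm hHmle).symm
    _ ≤ ∫⁻ a, H a := lintegral_mono fun a => min_le_left _ _

/-- Bounded by a finite constant on a compact set, zero elsewhere. -/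
def GoodBound {α : Type*} [TopologicalSpace α] (f : α → ℝ≥0∞) : Prop :=
  ∃ M K, M ≠ ∞ ∧ IsCompact K ∧ ∀ x, f x ≤ K.indicator (fun _ => M) x

lemma GoodBound.iSup_ne_top {α : Type*} [TopologicalSpace α] {f : α → ℝ≥0∞}
    (h : GoodBound f) : (⨆ a, f a) ≠ ∞ := by
  obtain ⟨M, K, hM, _, hb⟩ := h
  refine ne_top_of_le_ne_top hM (iSup_le fun a => (hb a).trans ?_)
  classical
  by_cases ha : a ∈ K <;> simp [Set.indicator_apply, ha]

lemma rpow_ne_zero' {x : ℝ≥0∞} (s : ℝ) (hx0 : x ≠ 0) (hxt : x ≠ ∞) : x ^ s ≠ 0 := by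
  intro h
  rw [ENNReal.rpow_eq_zero_iff] at h
  tauto

lemma rpow_ne_top' {x : ℝ≥0∞} (s : ℝ) (hx0 : x ≠ 0) (hxt : x ≠ ∞) : x ^ s ≠ ∞ := by
  intro h
  rw [ENNReal.rpow_eq_top_iff] at h
  tauto

lemma GoodBound.lintegral_ne_top {α : Type*} [TopologicalSpace α] [T2Space α] [MeasurableSpace α]
    [OpensMeasurableSpace α] {μ : Measure α} [IsFiniteMeasureOnCompacts μ] {f : α → ℝ≥0∞}
    (h : GoodBound f) : (∫⁻ a, f a ∂μ) ≠ ∞ := by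
  obtain ⟨M, K, hM, hK, hb⟩ := h
  have : (∫⁻ a, f a ∂μ) ≤ M * μ K := by
    refine le_trans (lintegral_mono hb) ?_
    rw [lintegral_indicator_const hK.measurableSet]
  exact ne_top_of_le_ne_top (ENNReal.mul_ne_top hM hK.measure_lt_top.ne) this

lemma pl_dim1 {t : ℝ} (ht : 0 < t) (ht' : t < 1)
    (F G H : ℝ → ℝ≥0∞) (hF : Measurable F) (hG : Measurable G) (hH : Measurable H)
    (hFb : GoodBound F) (hGb : GoodBound G)
    (hyp : ∀ a b, F a ^ (1 - t) * G b ^ t ≤ H ((1 - t) * a + t * b)) :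
    (∫⁻ a, F a) ^ (1 - t) * (∫⁻ a, G a) ^ t ≤ ∫⁻ a, H a := by
  have h1t : 0 < 1 - t := by linarith
  set MF := ⨆ a, F a with hMF
  set MG := ⨆ a, G a with hMG
  have hMFtop : MF ≠ ∞ := hFb.iSup_ne_top
  have hMGtop : MG ≠ ∞ := hGb.iSup_ne_top
  rcases eq_or_ne MF 0 with hMF0 | hMF0
  · have : ∀ a, F a = 0 := fun a => le_antisymm (hMF0 ▸ le_iSup F a) zero_le
    have hint : (∫⁻ a, F a) = 0 := by simp [this]
    rw [hint, ENNReal.zero_rpow_of_pos h1t, zero_mul]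
    exact zero_le
  rcases eq_or_ne MG 0 with hMG0 | hMG0
  · have : ∀ a, G a = 0 := fun a => le_antisymm (hMG0 ▸ le_iSup G a) zero_le
    have hint : (∫⁻ a, G a) = 0 := by simp [this]
    rw [hint, ENNReal.zero_rpow_of_pos ht, mul_zero]
    exact zero_le
  -- normalize
  have hFatop : ∀ a, F a ≠ ∞ := fun a => ne_top_of_le_ne_top hMFtop (le_iSup F a)
  have hGatop : ∀ a, G a ≠ ∞ := fun a => ne_top_of_le_ne_top hMGtop (le_iSup G a)
  have hMFinv_top : MF⁻¹ ≠ ∞ := by simp [ENNReal.inv_ne_top, hMF0]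
  have hMGinv_top : MG⁻¹ ≠ ∞ := by simp [ENNReal.inv_ne_top, hMG0]
  set N := MF ^ (1 - t) * MG ^ t with hN
  have hN0 : N ≠ 0 :=
    mul_ne_zero (rpow_ne_zero' _ hMF0 hMFtop) (rpow_ne_zero' _ hMG0 hMGtop)
  have hNtop : N ≠ ∞ :=
    ENNReal.mul_ne_top (rpow_ne_top' _ hMF0 hMFtop) (rpow_ne_top' _ hMG0 hMGtop)
  set F' := fun a => F a * MF⁻¹ with hF'
  set G' := fun a => G a * MG⁻¹ with hG'
  set H' := fun a => H a * N⁻¹ with hH'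
  have hNinvtop : N⁻¹ ≠ ∞ := by simp [ENNReal.inv_ne_top, hN0]
  have hF'1 : ⨆ a, F' a = 1 := by
    rw [hF', ← ENNReal.iSup_mul, ← hMF, ENNReal.mul_inv_cancel hMF0 hMFtop]
  have hG'1 : ⨆ a, G' a = 1 := by
    rw [hG', ← ENNReal.iSup_mul, ← hMG, ENNReal.mul_inv_cancel hMG0 hMGtop]
  have hyp' : ∀ a b, F' a ^ (1 - t) * G' b ^ t ≤ H' ((1 - t) * a + t * b) := by
    intro a b
    have e1 : F' a ^ (1 - t) = F a ^ (1 - t) * (MF⁻¹) ^ (1 - t) :=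
      ENNReal.mul_rpow_of_ne_top (hFatop a) hMFinv_top _
    have e2 : G' b ^ t = G b ^ t * (MG⁻¹) ^ t :=
      ENNReal.mul_rpow_of_ne_top (hGatop b) hMGinv_top _
    have e3 : (MF⁻¹) ^ (1 - t) * (MG⁻¹) ^ t = N⁻¹ := by
      rw [ENNReal.inv_rpow, ENNReal.inv_rpow, hN,
        ENNReal.mul_inv (Or.inl (rpow_ne_zero' _ hMF0 hMFtop))
          (Or.inl (rpow_ne_top' _ hMF0 hMFtop))]
    calc F' a ^ (1 - t) * G' b ^ t
        = (F a ^ (1 - t) * G b ^ t) * ((MF⁻¹) ^ (1 - t) * (MG⁻¹) ^ t) := by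
          rw [e1, e2]; ring
      _ = (F a ^ (1 - t) * G b ^ t) * N⁻¹ := by rw [e3]
      _ ≤ H ((1 - t) * a + t * b) * N⁻¹ := mul_le_mul_left (hyp a b) _
  have hF'm : Measurable F' := hF.mul_const _
  have hG'm : Measurable G' := hG.mul_const _
  have hH'm : Measurable H' := hH.mul_const _
  have core := pl_dim1_core ht ht' F' G' H' hF'm hG'm hH'm hF'1 hG'1 hyp'
  have hiF : (∫⁻ a, F' a) = (∫⁻ a, F a) * MF⁻¹ := lintegral_mul_const' _ _ hMFinv_top
  have hiG : (∫⁻ a, G' a) = (∫⁻ a, G a) * MG⁻¹ := lintegral_mul_const' _ _ hMGinv_top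
  have hiH : (∫⁻ a, H' a) = (∫⁻ a, H a) * N⁻¹ := lintegral_mul_const' _ _ hNinvtop
  rw [hiF, hiG, hiH] at core
  have amgm := (ennreal_am_gm ht ht' ((∫⁻ a, F a) * MF⁻¹) ((∫⁻ a, G a) * MG⁻¹)).trans core
  have hIFtop : (∫⁻ a, F a) ≠ ∞ := hFb.lintegral_ne_top
  have hIGtop : (∫⁻ a, G a) ≠ ∞ := hGb.lintegral_ne_top
  have expand : ((∫⁻ a, F a) * MF⁻¹) ^ (1 - t) * ((∫⁻ a, G a) * MG⁻¹) ^ t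
      = ((∫⁻ a, F a) ^ (1 - t) * (∫⁻ a, G a) ^ t) * N⁻¹ := by
    rw [ENNReal.mul_rpow_of_ne_top hIFtop hMFinv_top, ENNReal.mul_rpow_of_ne_top hIGtop hMGinv_top,
      ENNReal.inv_rpow, ENNReal.inv_rpow, hN,
      ENNReal.mul_inv (Or.inl (rpow_ne_zero' _ hMF0 hMFtop))
        (Or.inl (rpow_ne_top' _ hMF0 hMFtop))]
    ring
  rw [expand] at amgm
  have hNinv0 : N⁻¹ ≠ 0 := by simp [hNtop]
  exact (ENNReal.mul_le_mul_iff_left hNinv0 hNinvtop).1 amgm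

theorem pl_pi (n : ℕ) {t : ℝ} (ht : 0 < t) (ht' : t < 1)
    (f g h : (Fin n → ℝ) → ℝ≥0∞) (hf : Measurable f) (hg : Measurable g) (hh : Measurable h)
    (hfb : GoodBound f) (hgb : GoodBound g)
    (hyp : ∀ x y, f x ^ (1 - t) * g y ^ t ≤ h ((1 - t) • x + t • y)) :
    (∫⁻ x, f x) ^ (1 - t) * (∫⁻ x, g x) ^ t ≤ ∫⁻ x, h x := by
  induction n with
  | zero =>
    have huniv : volume (Set.univ : Set (Fin 0 → ℝ)) = 1 := by
      rw [MeasureTheory.volume_pi, Measure.pi_univ]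
      simp
    have hconst : ∀ (φ : (Fin 0 → ℝ) → ℝ≥0∞) (x : Fin 0 → ℝ), φ = fun _ => φ x :=
      fun φ x => funext fun y => congrArg φ (Subsingleton.elim y x)
    set z : Fin 0 → ℝ := fun i => i.elim0 with hz
    rw [hconst f z, hconst g z, hconst h z, lintegral_const, lintegral_const, lintegral_const,
      huniv, mul_one, mul_one, mul_one]
    exact (hyp z z).trans (le_of_eq (congrArg h (Subsingleton.elim _ _)))
  | succ n ih =>
    classical
    set e := MeasurableEquiv.piFinSuccAbove (fun _ : Fin (n+1) => ℝ) 0 with he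
    have me : MeasurePreserving (⇑e) volume volume :=
      volume_preserving_piFinSuccAbove (fun _ : Fin (n+1) => ℝ) 0
    have hesymm : ∀ p : ℝ × (Fin n → ℝ), e.symm p = Fin.insertNth 0 p.1 p.2 := fun p => rfl
    have hlin : ∀ (p q : ℝ × (Fin n → ℝ)),
        e.symm ((1 - t) • p + t • q) = (1 - t) • e.symm p + t • e.symm q := by
      intro p q
      rw [hesymm, hesymm, hesymm]
      funext i
      induction i using Fin.cases with
      | zero => simp [Prod.smul_fst, Prod.fst_add, smul_eq_mul]
      | succ j => simp [Prod.smul_snd, Prod.snd_add, smul_eq_mul]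
    set f' : ℝ × (Fin n → ℝ) → ℝ≥0∞ := fun p => f (e.symm p) with hf'def
    set g' : ℝ × (Fin n → ℝ) → ℝ≥0∞ := fun p => g (e.symm p) with hg'def
    set h' : ℝ × (Fin n → ℝ) → ℝ≥0∞ := fun p => h (e.symm p) with hh'def
    have hf' : Measurable f' := hf.comp e.symm.measurable
    have hg' : Measurable g' := hg.comp e.symm.measurable
    have hh' : Measurable h' := hh.comp e.symm.measurable
    have hecont : Continuous (⇑e) := by
      show Continuous fun x : Fin (n+1) → ℝ =>
        ((x 0, fun j => x (Fin.succAbove 0 j)) : ℝ × (Fin n → ℝ))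
      exact (continuous_apply 0).prodMk (continuous_pi fun j => continuous_apply _)
    -- transported good bounds
    have transfer : ∀ (φ : (Fin (n+1) → ℝ) → ℝ≥0∞), GoodBound φ →
        GoodBound (fun p => φ (e.symm p)) := by
      rintro φ ⟨M, K, hM, hK, hb⟩
      refine ⟨M, ⇑e '' K, hM, hK.image hecont, fun p => ?_⟩
      by_cases hp : p ∈ ⇑e '' K
      · simp only [Set.indicator_of_mem hp]
        exact le_trans (hb _) (by
          classical
          by_cases hq : e.symm p ∈ K
          · simp [Set.indicator_of_mem hq]
          · simp [Set.indicator_of_notMem hq])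
      · have hq : e.symm p ∉ K := by
          intro hq
          exact hp ⟨e.symm p, hq, by simp⟩
        simpa [Set.indicator_of_notMem hp, Set.indicator_of_notMem hq] using hb (e.symm p)
    have hf'b : GoodBound f' := transfer f hfb
    have hg'b : GoodBound g' := transfer g hgb
    -- slice integrals
    set F : ℝ → ℝ≥0∞ := fun a => ∫⁻ x, f' (a, x) with hFdef
    set G : ℝ → ℝ≥0∞ := fun b => ∫⁻ y, g' (b, y) with hGdef
    set H : ℝ → ℝ≥0∞ := fun c => ∫⁻ z, h' (c, z) with hHdef
    have hF : Measurable F := hf'.lintegral_prod_right'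
    have hG : Measurable G := hg'.lintegral_prod_right'
    have hH : Measurable H := hh'.lintegral_prod_right'
    -- good bounds for slice integrals
    have sliceGB : ∀ (φ : ℝ × (Fin n → ℝ) → ℝ≥0∞), Measurable φ → GoodBound φ →
        GoodBound (fun a => ∫⁻ x, φ (a, x)) := by
      rintro φ hφ ⟨M, K, hM, hK, hb⟩
      have hP : IsCompact (Prod.fst '' K) := hK.image continuous_fst
      have hQ : IsCompact (Prod.snd '' K) := hK.image continuous_snd
      refine ⟨M * volume (Prod.snd '' K), Prod.fst '' K,
        ENNReal.mul_ne_top hM hQ.measure_lt_top.ne, hP, fun a => ?_⟩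
      have hslice : ∀ a : ℝ, (∫⁻ x, φ (a, x)) ≤ M * volume {x | (a, x) ∈ K} := by
        intro a
        have : ∀ x, φ (a, x) ≤ ({x | (a, x) ∈ K} : Set (Fin n → ℝ)).indicator (fun _ => M) x := by
          intro x
          refine le_trans (hb (a, x)) ?_
          by_cases hx : (a, x) ∈ K
          · simp [Set.indicator_of_mem, hx, Set.indicator_of_mem (show x ∈ {x | (a,x) ∈ K} from hx)]
          · simp [Set.indicator_of_notMem, hx, Set.indicator_of_notMem (show x ∉ {x | (a,x) ∈ K} from hx)]
        refine le_trans (lintegral_mono this) ?_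
        rw [lintegral_indicator_const
          (show MeasurableSet {x : Fin n → ℝ | (a, x) ∈ K} from
            measurable_prodMk_left hK.measurableSet)]
      by_cases ha : a ∈ Prod.fst '' K
      · rw [Set.indicator_of_mem ha]
        refine (hslice a).trans (mul_le_mul_right (measure_mono ?_) M)
        rintro x hx
        exact ⟨(a, x), hx, rfl⟩
      · rw [Set.indicator_of_notMem ha]
        have : {x : Fin n → ℝ | (a, x) ∈ K} = ∅ := by
          ext x
          simp only [Set.mem_setOf_eq, Set.mem_empty_iff_false, iff_false]
          intro hx
          exact ha ⟨(a, x), hx, rfl⟩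
        refine le_trans (hslice a) ?_
        rw [this]
        simp
    have hFb : GoodBound F := sliceGB f' hf' hf'b
    have hGb : GoodBound G := sliceGB g' hg' hg'b
    have sliceFix : ∀ (φ : ℝ × (Fin n → ℝ) → ℝ≥0∞) (a : ℝ), GoodBound φ →
        GoodBound (fun x => φ (a, x)) := by
      rintro φ a ⟨M, K, hM, hK, hb⟩
      refine ⟨M, Prod.snd '' K, hM, hK.image continuous_snd, fun x => ?_⟩
      refine le_trans (hb (a, x)) ?_
      by_cases hx : (a, x) ∈ K
      · have h1 : x ∈ Prod.snd '' K := ⟨(a, x), hx, rfl⟩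
        simp [Set.indicator_of_mem hx, Set.indicator_of_mem h1]
      · simp [Set.indicator_of_notMem hx]
    -- the hypothesis for slice integrals
    have hypFGH : ∀ a b, F a ^ (1 - t) * G b ^ t ≤ H ((1 - t) * a + t * b) := by
      intro a b
      apply ih (fun x => f' (a, x)) (fun y => g' (b, y)) (fun z => h' ((1 - t) * a + t * b, z))
        (hf'.comp measurable_prodMk_left) (hg'.comp measurable_prodMk_left)
        (hh'.comp measurable_prodMk_left)
      · exact sliceFix f' a hf'b
      · exact sliceFix g' b hg'b
      · intro x y
        have hthis := hyp (e.symm (a, x)) (e.symm (b, y))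
        rw [← hlin (a, x) (b, y)] at hthis
        have hpt : ((1 - t) • ((a, x) : ℝ × (Fin n → ℝ)) + t • (b, y))
            = ((1 - t) * a + t * b, (1 - t) • x + t • y) := by
          simp [Prod.ext_iff, smul_eq_mul]
        rwa [hpt] at hthis
    -- final assembly
    have main := pl_dim1 ht ht' F G H hF hG hH hFb hGb hypFGH
    have hif : (∫⁻ x, f x) = ∫⁻ a, F a := by
      calc (∫⁻ x, f x) = ∫⁻ p, f' p := ((me.symm e).lintegral_comp hf).symm
        _ = ∫⁻ a, ∫⁻ x, f' (a, x) := by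
            rw [Measure.volume_eq_prod ℝ (Fin n → ℝ), lintegral_prod _ hf'.aemeasurable]
    have hig : (∫⁻ x, g x) = ∫⁻ a, G a := by
      calc (∫⁻ x, g x) = ∫⁻ p, g' p := ((me.symm e).lintegral_comp hg).symm
        _ = ∫⁻ a, ∫⁻ x, g' (a, x) := by
            rw [Measure.volume_eq_prod ℝ (Fin n → ℝ), lintegral_prod _ hg'.aemeasurable]
    have hih : (∫⁻ x, h x) = ∫⁻ a, H a := by
      calc (∫⁻ x, h x) = ∫⁻ p, h' p := ((me.symm e).lintegral_comp hh).symm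
        _ = ∫⁻ a, ∫⁻ x, h' (a, x) := by
            rw [Measure.volume_eq_prod ℝ (Fin n → ℝ), lintegral_prod _ hh'.aemeasurable]
    rw [hif, hig, hih]
    exact main

lemma mul_bm {n : ℕ} {t : ℝ} (ht : 0 < t) (ht' : t < 1) (A B : Set (Fin n → ℝ))
    (hA : IsCompact A) (hB : IsCompact B) :
    volume A ^ (1 - t) * volume B ^ t ≤ volume ((1 - t) • A + t • B) := by
  have h1t : 0 < 1 - t := by linarith
  have hA1 : IsCompact ((1 - t) • A) := by
    rw [← Set.image_smul]
    exact hA.image (continuous_const_smul _)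
  have hB1 : IsCompact (t • B) := by
    rw [← Set.image_smul]
    exact hB.image (continuous_const_smul _)
  have hC : IsCompact ((1 - t) • A + t • B) := hA1.add hB1
  set f := A.indicator (fun _ => (1 : ℝ≥0∞)) with hfdef
  set g := B.indicator (fun _ => (1 : ℝ≥0∞)) with hgdef
  set h := ((1 - t) • A + t • B).indicator (fun _ => (1 : ℝ≥0∞)) with hhdef
  have hf : Measurable f := (measurable_const.indicator hA.measurableSet)
  have hg : Measurable g := (measurable_const.indicator hB.measurableSet)
  have hh : Measurable h := (measurable_const.indicator hC.measurableSet)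
  have hfb : GoodBound f := ⟨1, A, ENNReal.one_ne_top, hA, fun x => le_rfl⟩
  have hgb : GoodBound g := ⟨1, B, ENNReal.one_ne_top, hB, fun x => le_rfl⟩
  have hyp : ∀ x y, f x ^ (1 - t) * g y ^ t ≤ h ((1 - t) • x + t • y) := by
    intro x y
    by_cases hx : x ∈ A
    · by_cases hy : y ∈ B
      · have hmem : (1 - t) • x + t • y ∈ (1 - t) • A + t • B :=
          Set.add_mem_add (Set.smul_mem_smul_set hx) (Set.smul_mem_smul_set hy)
        simp [hfdef, hgdef, hhdef, Set.indicator_of_mem hx, Set.indicator_of_mem hy,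
          Set.indicator_of_mem hmem, ENNReal.one_rpow]
      · simp [hfdef, hgdef, Set.indicator_of_notMem hy, ENNReal.zero_rpow_of_pos ht]
    · simp [hfdef, Set.indicator_of_notMem hx, ENNReal.zero_rpow_of_pos h1t]
  have key := pl_pi n ht ht' f g h hf hg hh hfb hgb hyp
  rwa [hfdef, hgdef, hhdef, lintegral_indicator_const hA.measurableSet,
    lintegral_indicator_const hB.measurableSet, lintegral_indicator_const hC.measurableSet,
    one_mul, one_mul, one_mul] at key

lemma add_bm {n : ℕ} (hn : 0 < n) (A B : Set (Fin n → ℝ))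
    (hA : IsCompact A) (hB : IsCompact B) (hAne : A.Nonempty) (hBne : B.Nonempty) :
    volume A ^ (n : ℝ)⁻¹ + volume B ^ (n : ℝ)⁻¹ ≤ volume (A + B) ^ (n : ℝ)⁻¹ := by
  have hninv : (0:ℝ) < (n : ℝ)⁻¹ := by positivity
  have hABc : IsCompact (A + B) := hA.add hB
  have hfinA : volume A ≠ ∞ := hA.measure_lt_top.ne
  have hfinB : volume B ≠ ∞ := hB.measure_lt_top.ne
  have hfinAB : volume (A + B) ≠ ∞ := hABc.measure_lt_top.ne
  obtain ⟨a0, ha0⟩ := hAne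
  obtain ⟨b0, hb0⟩ := hBne
  have hBle : volume B ≤ volume (A + B) := by
    rw [← measure_vadd volume a0 B]
    exact measure_mono (by rintro x ⟨y, hy, rfl⟩; exact ⟨a0, ha0, y, hy, rfl⟩)
  have hAle : volume A ≤ volume (A + B) := by
    rw [← measure_vadd volume b0 A]
    exact measure_mono (by rintro x ⟨y, hy, rfl⟩; exact ⟨y, hy, b0, hb0, add_comm y b0⟩)
  rcases eq_or_ne (volume A) 0 with h0 | h0
  · rw [h0, ENNReal.zero_rpow_of_pos hninv, zero_add]
    exact ENNReal.rpow_le_rpow hBle hninv.le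
  rcases eq_or_ne (volume B) 0 with h0' | h0'
  · rw [h0', ENNReal.zero_rpow_of_pos hninv, add_zero]
    exact ENNReal.rpow_le_rpow hAle hninv.le
  -- main case
  set va := (volume A).toReal with hva
  set vb := (volume B).toReal with hvb
  have hva0 : 0 < va := ENNReal.toReal_pos h0 hfinA
  have hvb0 : 0 < vb := ENNReal.toReal_pos h0' hfinB
  set a := va ^ (n : ℝ)⁻¹ with ha
  set b := vb ^ (n : ℝ)⁻¹ with hb
  have ha0 : 0 < a := Real.rpow_pos_of_pos hva0 _
  have hb0' : 0 < b := Real.rpow_pos_of_pos hvb0 _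
  set s := a + b with hs
  have hs0 : 0 < s := by positivity
  have hapow : a ^ n = va := by
    rw [ha, ← Real.rpow_natCast (va ^ (n:ℝ)⁻¹) n, ← Real.rpow_mul hva0.le,
      inv_mul_cancel₀ (by exact_mod_cast hn.ne' : (n:ℝ) ≠ 0), Real.rpow_one]
  have hbpow : b ^ n = vb := by
    rw [hb, ← Real.rpow_natCast (vb ^ (n:ℝ)⁻¹) n, ← Real.rpow_mul hvb0.le,
      inv_mul_cancel₀ (by exact_mod_cast hn.ne' : (n:ℝ) ≠ 0), Real.rpow_one]
  set t := b / s with htdef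
  have ht : 0 < t := div_pos hb0' hs0
  have ht' : t < 1 := by
    rw [htdef, div_lt_one hs0]
    linarith
  have h1t : 1 - t = a / s := by
    rw [htdef]
    field_simp
    rw [hs]
    ring
  have h1t0 : (0:ℝ) < 1 - t := by linarith
  have hrank : Module.finrank ℝ (Fin n → ℝ) = n := by simp
  set A1 := (1 - t)⁻¹ • A with hA1def
  set B1 := t⁻¹ • B with hB1def
  have hA1c : IsCompact A1 := by
    rw [hA1def, ← Set.image_smul]
    exact hA.image (continuous_const_smul _)
  have hB1c : IsCompact B1 := by
    rw [hB1def, ← Set.image_smul]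
    exact hB.image (continuous_const_smul _)
  have hA1back : (1 - t) • A1 = A := by
    rw [hA1def, smul_smul, mul_inv_cancel₀ h1t0.ne', one_smul]
  have hB1back : t • B1 = B := by
    rw [hB1def, smul_smul, mul_inv_cancel₀ ht.ne', one_smul]
  have key := mul_bm ht ht' A1 B1 hA1c hB1c
  rw [hA1back, hB1back] at key
  -- compute volumes of A1, B1
  have hvolA : volume A = ENNReal.ofReal va := (ENNReal.ofReal_toReal hfinA).symm
  have hvolB : volume B = ENNReal.ofReal vb := (ENNReal.ofReal_toReal hfinB).symm
  have hvolA1 : volume A1 = ENNReal.ofReal (s ^ n) := by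
    rw [hA1def, Measure.addHaar_smul, hrank, hvolA, ← ENNReal.ofReal_mul (abs_nonneg _)]
    congr 1
    rw [h1t, abs_of_pos (by positivity : (0:ℝ) < ((a/s)⁻¹) ^ n)]
    rw [inv_div, div_pow, ← hapow]
    field_simp
  have hvolB1 : volume B1 = ENNReal.ofReal (s ^ n) := by
    rw [hB1def, Measure.addHaar_smul, hrank, hvolB, ← ENNReal.ofReal_mul (abs_nonneg _)]
    congr 1
    rw [htdef, abs_of_pos (by positivity : (0:ℝ) < ((b/s)⁻¹) ^ n)]
    rw [inv_div, div_pow, ← hbpow]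
    field_simp
  rw [hvolA1, hvolB1] at key
  have hcollapse : ENNReal.ofReal (s ^ n) ^ (1 - t) * ENNReal.ofReal (s ^ n) ^ t
      = ENNReal.ofReal (s ^ n) := by
    rw [← ENNReal.rpow_add _ _ (by simp only [ne_eq, ENNReal.ofReal_eq_zero, not_le]; positivity)
      ENNReal.ofReal_ne_top]
    norm_num
  rw [hcollapse] at key
  -- conclude
  have hgoalL : volume A ^ (n:ℝ)⁻¹ + volume B ^ (n:ℝ)⁻¹ = ENNReal.ofReal s := by
    rw [hvolA, hvolB, ENNReal.ofReal_rpow_of_nonneg hva0.le hninv.le,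
      ENNReal.ofReal_rpow_of_nonneg hvb0.le hninv.le, ← ENNReal.ofReal_add
      (by positivity) (by positivity)]
  rw [hgoalL]
  have := ENNReal.rpow_le_rpow key hninv.le
  rwa [ENNReal.ofReal_rpow_of_nonneg (by positivity) hninv.le,
    ← Real.rpow_natCast s n, ← Real.rpow_mul hs0.le,
    mul_inv_cancel₀ (by exact_mod_cast hn.ne' : (n:ℝ) ≠ 0), Real.rpow_one] at this

lemma add_bm_euc {n : ℕ} (hn : 0 < n) (A B : Set (EuclideanSpace ℝ (Fin n)))
    (hA : IsCompact A) (hB : IsCompact B) (hAne : A.Nonempty) (hBne : B.Nonempty) :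
    volume A ^ (n : ℝ)⁻¹ + volume B ^ (n : ℝ)⁻¹ ≤ volume (A + B) ^ (n : ℝ)⁻¹ := by
  set e := (MeasurableEquiv.toLp 2 (Fin n → ℝ)).symm with he
  have me := EuclideanSpace.volume_preserving_symm_measurableEquiv_toLp (Fin n)
  have himg : ∀ S : Set (EuclideanSpace ℝ (Fin n)), MeasurableSet S →
      volume (⇑e '' S) = volume S := by
    intro S hS
    rw [MeasurableEquiv.image_eq_preimage_symm]
    exact (MeasurePreserving.symm e me).measure_preimage hS.nullMeasurableSet
  have hcont : Continuous ⇑e := PiLp.continuous_ofLp 2 (fun _ : Fin n => ℝ)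
  have h1 : IsCompact (⇑e '' A) := hA.image hcont
  have h2 : IsCompact (⇑e '' B) := hB.image hcont
  have hsum : ⇑e '' (A + B) = ⇑e '' A + ⇑e '' B := by
    ext x
    constructor
    · rintro ⟨z, ⟨p, hp, q, hq, rfl⟩, rfl⟩
      exact ⟨e p, ⟨p, hp, rfl⟩, e q, ⟨q, hq, rfl⟩, rfl⟩
    · rintro ⟨y, ⟨p, hp, rfl⟩, w, ⟨q, hq, rfl⟩, rfl⟩
      exact ⟨p + q, ⟨p, hp, q, hq, rfl⟩, rfl⟩
  rw [← himg A hA.measurableSet, ← himg B hB.measurableSet,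
    ← himg (A + B) (hA.add hB).measurableSet, hsum]
  exact add_bm hn _ _ h1 h2 (hAne.image _) (hBne.image _)

lemma euclidean_nontrivial {n : ℕ} (hn : 1 ≤ n) : Nontrivial (EuclideanSpace ℝ (Fin n)) := by
  refine ⟨0, EuclideanSpace.single ⟨0, hn⟩ 1, fun h => ?_⟩
  have := congrArg (fun v => v ⟨0, hn⟩) h.symm
  simp [EuclideanSpace.single_apply] at this

lemma ratio_eq {n : ℕ} (hn : 1 ≤ n) (S : Set (EuclideanSpace ℝ (Fin n)))
    (x : EuclideanSpace ℝ (Fin n)) {ρ : ℝ} (hρ : 0 < ρ) :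
    volume (S ∩ closedBall x ρ) / volume (closedBall x ρ)
      = volume (S ∩ ball x ρ) / volume (ball x ρ) := by
  have := euclidean_nontrivial hn
  have hsph : volume (sphere x ρ) = 0 := Measure.addHaar_sphere volume x ρ
  have hcb : volume (closedBall x ρ) = volume (ball x ρ) := by
    apply le_antisymm _ (measure_mono ball_subset_closedBall)
    calc volume (closedBall x ρ) ≤ volume (ball x ρ ∪ sphere x ρ) := by
          apply measure_mono
          intro y hy
          rcases lt_or_eq_of_le (mem_closedBall.1 hy) with h | h
          · exact Or.inl h
          · exact Or.inr h
      _ ≤ volume (ball x ρ) + volume (sphere x ρ) := measure_union_le _ _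
      _ = volume (ball x ρ) := by rw [hsph, add_zero]
  have hScb : volume (S ∩ closedBall x ρ) = volume (S ∩ ball x ρ) := by
    apply le_antisymm _ (measure_mono (inter_subset_inter_right _ ball_subset_closedBall))
    calc volume (S ∩ closedBall x ρ) ≤ volume ((S ∩ ball x ρ) ∪ sphere x ρ) := by
          apply measure_mono
          rintro y ⟨hyS, hycb⟩
          rcases lt_or_eq_of_le (mem_closedBall.1 hycb) with h | h
          · exact Or.inl ⟨hyS, h⟩
          · exact Or.inr h
      _ ≤ volume (S ∩ ball x ρ) + volume (sphere x ρ) := measure_union_le _ _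
      _ = volume (S ∩ ball x ρ) := by rw [hsph, add_zero]
  rw [hcb, hScb]

lemma density_ae {n : ℕ} (hn : 1 ≤ n) (E : Set (EuclideanSpace ℝ (Fin n)))
    (hE : MeasurableSet E) :
    densityOnePoints n E =ᵐ[volume] E := by
  have h1 := Besicovitch.ae_tendsto_measure_inter_div_of_measurableSet (volume) hE
  rw [Filter.eventuallyEq_set]
  filter_upwards [h1] with x hx
  have hcongr : (fun ρ : ℝ => volume (E ∩ closedBall x ρ) / volume (closedBall x ρ))
      =ᶠ[nhdsWithin 0 (Ioi 0)]
      (fun ρ : ℝ => volume (E ∩ ball x ρ) / volume (ball x ρ)) := by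
    filter_upwards [self_mem_nhdsWithin] with ρ hρ
    exact ratio_eq hn E x hρ
  constructor
  · intro hxD
    by_contra hxE
    rw [Set.indicator_of_notMem hxE] at hx
    have h0 : Tendsto (fun ρ : ℝ => volume (E ∩ ball x ρ) / volume (ball x ρ))
        (nhdsWithin 0 (Ioi 0)) (nhds 0) := hx.congr' hcongr
    have h1' : Tendsto (fun ρ : ℝ => volume (E ∩ ball x ρ) / volume (ball x ρ))
        (nhdsWithin 0 (Ioi 0)) (nhds 1) := hxD
    exact zero_ne_one (tendsto_nhds_unique h0 h1')
  · intro hxE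
    rw [Set.indicator_of_mem hxE] at hx
    have : Tendsto (fun ρ : ℝ => volume (E ∩ ball x ρ) / volume (ball x ρ))
        (nhdsWithin 0 (Ioi 0)) (nhds 1) := by
      have := hx.congr' hcongr
      simpa using this
    exact this

/-- A preconnected set avoiding the frontier of `D` that meets the interior of `D`
lies in the interior of `D`. -/
lemma preconn_subset_interior {X : Type*} [TopologicalSpace X] {D s : Set X}
    (hs : IsPreconnected s) (hdisj : ∀ y ∈ s, y ∉ frontier D)
    {x : X} (hx : x ∈ s) (hxi : x ∈ interior D) : s ⊆ interior D := by
  by_contra hcon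
  obtain ⟨y, hy, hyU⟩ := not_subset.mp hcon
  have hyV : y ∈ interior Dᶜ := by
    rw [interior_compl]
    intro hyc
    exact hdisj y hy ⟨hyc, hyU⟩
  have hUV : s ⊆ interior D ∪ interior Dᶜ := by
    intro z hz
    by_cases hzc : z ∈ closure D
    · left
      by_contra hzi
      exact hdisj z hz ⟨hzc, hzi⟩
    · right
      rw [interior_compl]
      exact hzc
  obtain ⟨z, hzs, hzU, hzV⟩ :=
    hs (interior D) (interior Dᶜ) isOpen_interior isOpen_interior hUV ⟨x, hx, hxi⟩ ⟨y, hy, hyV⟩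
  rw [interior_compl] at hzV
  exact hzV (subset_closure (interior_subset hzU))


end BrunnMinkowskiAux

/-- Volume of the inner set `E ⊖ B_r` is at most the volume of `B_{R-r}`. -/
theorem minkSub_volume_le (n : ℕ) (hn : 1 ≤ n) (r R : ℝ) (hr : 0 < r) (hrR : r ≤ R)
    (E : Set (EuclideanSpace ℝ (Fin n))) (hE : MeasurableSet E)
    (hbd : IsBounded (frontier (densityOnePoints n E)))
    (hvol : volume E = volume (ball (0 : EuclideanSpace ℝ (Fin n)) R)) :
    volume (minkSub n r E) ≤ volume (ball (0 : EuclideanSpace ℝ (Fin n)) (R - r)) := by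
  have hnt : Nontrivial (EuclideanSpace ℝ (Fin n)) := euclidean_nontrivial hn
  have hn0 : 0 < n := hn
  have hninv : (0:ℝ) < (n : ℝ)⁻¹ := by positivity
  have hR0 : 0 ≤ R := le_trans hr.le hrR
  have hrank : Module.finrank ℝ (EuclideanSpace ℝ (Fin n)) = n := finrank_euclideanSpace_fin
  set D := densityOnePoints n E with hD
  set S := minkSum n r (frontier D) with hS
  have hSopen : IsOpen S := isOpen_biUnion fun x _ => isOpen_ball
  have hDE : D =ᵐ[volume] E := density_ae hn E hE
  have hvolD : volume D = volume E := measure_congr hDE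
  set c := volume (ball (0 : EuclideanSpace ℝ (Fin n)) 1) with hc
  have hc0 : c ≠ 0 := (measure_ball_pos _ _ one_pos).ne'
  have hctop : c ≠ ∞ := measure_ball_lt_top.ne
  have hvolballR : volume (ball (0 : EuclideanSpace ℝ (Fin n)) R)
      = ENNReal.ofReal (R ^ n) * c := by
    rw [Measure.addHaar_ball volume _ hR0, hrank]
  set A := minkSub n r E with hA
  -- geometric step
  have key : ∀ x ∈ A, ball x r ⊆ interior D := by
    intro x hx
    obtain ⟨hxD, hxS⟩ := hx
    have hfr : ∀ y ∈ ball x r, y ∉ frontier D := by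
      intro y hy hyF
      exact hxS (mem_biUnion hyF (mem_ball_comm.1 hy))
    have hxint : x ∈ interior D := by
      by_contra hxint
      exact hfr x (mem_ball_self hr) ⟨subset_closure hxD, hxint⟩
    exact preconn_subset_interior (convex_ball x r).isPreconnected hfr (mem_ball_self hr) hxint
  -- A is null measurable; measurable core T
  have hAnm : NullMeasurableSet A volume := by
    have hDnm : NullMeasurableSet D volume := hE.nullMeasurableSet.congr hDE.symm
    exact hDnm.diff hSopen.measurableSet.nullMeasurableSet
  obtain ⟨T, hTA, hTm, hTae⟩ := hAnm.exists_measurable_subset_ae_eq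
  have hvolT : volume T = volume A := measure_congr hTae
  have hAD : A ⊆ D := fun x hx => hx.1
  have hvolAfin : volume A ≠ ∞ := by
    rw [← lt_top_iff_ne_top]
    calc volume A ≤ volume D := measure_mono hAD
      _ = volume E := hvolD
      _ = volume (ball (0 : EuclideanSpace ℝ (Fin n)) R) := hvol
      _ < ∞ := measure_ball_lt_top
  have hvolTfin : volume T ≠ ∞ := by rw [hvolT]; exact hvolAfin
  -- bound for compact subsets, given inner radius r' < r
  have keybound : ∀ r' : ℝ, 0 < r' → r' < r →
      ∀ K : Set (EuclideanSpace ℝ (Fin n)), IsCompact K → K ⊆ T →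
      volume K ≤ ENNReal.ofReal ((R - r') ^ n) * c := by
    intro r' hr'0 hr'r K hK hKT
    rcases K.eq_empty_or_nonempty with hKe | hKne
    · simp [hKe]
    set L := closedBall (0 : EuclideanSpace ℝ (Fin n)) r' with hL
    have hLc : IsCompact L := isCompact_closedBall _ _
    have hLne : L.Nonempty := ⟨0, mem_closedBall_self hr'0.le⟩
    have hKL : K + L ⊆ D := by
      rintro z ⟨x, hxK, y, hyL, rfl⟩
      have hxA : x ∈ A := hTA (hKT hxK)
      have hmem : x + y ∈ ball x r := by
        rw [mem_ball, dist_eq_norm]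
        simpa using lt_of_le_of_lt (mem_closedBall_zero_iff.1 hyL) hr'r
      exact interior_subset (key x hxA hmem)
    have bm := add_bm_euc hn0 K L hK hLc hKne hLne
    have hvolL : volume L = ENNReal.ofReal (r' ^ n) * c := by
      rw [hL, Measure.addHaar_closedBall volume _ hr'0.le, hrank]
    have hKLvol : volume (K + L) ≤ ENNReal.ofReal (R ^ n) * c := by
      rw [← hvolballR, ← hvol, ← hvolD]
      exact measure_mono hKL
    have hsim : ∀ ρ : ℝ, 0 ≤ ρ →
        (ENNReal.ofReal (ρ ^ n) * c) ^ (n:ℝ)⁻¹ = ENNReal.ofReal ρ * c ^ (n:ℝ)⁻¹ := by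
      intro ρ hρ
      rw [ENNReal.mul_rpow_of_ne_top ENNReal.ofReal_ne_top hctop,
        ENNReal.ofReal_rpow_of_nonneg (by positivity) hninv.le]
      congr 2
      rw [← Real.rpow_natCast ρ n, ← Real.rpow_mul hρ,
        mul_inv_cancel₀ (by exact_mod_cast hn0.ne' : (n:ℝ) ≠ 0), Real.rpow_one]
    have step1 : volume K ^ (n:ℝ)⁻¹ + ENNReal.ofReal r' * c ^ (n:ℝ)⁻¹
        ≤ ENNReal.ofReal R * c ^ (n:ℝ)⁻¹ := by
      calc volume K ^ (n:ℝ)⁻¹ + ENNReal.ofReal r' * c ^ (n:ℝ)⁻¹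
          = volume K ^ (n:ℝ)⁻¹ + volume L ^ (n:ℝ)⁻¹ := by rw [hvolL, hsim r' hr'0.le]
        _ ≤ volume (K + L) ^ (n:ℝ)⁻¹ := bm
        _ ≤ (ENNReal.ofReal (R ^ n) * c) ^ (n:ℝ)⁻¹ := ENNReal.rpow_le_rpow hKLvol hninv.le
        _ = ENNReal.ofReal R * c ^ (n:ℝ)⁻¹ := hsim R hR0
    have step2 : volume K ^ (n:ℝ)⁻¹ ≤ ENNReal.ofReal (R - r') * c ^ (n:ℝ)⁻¹ := by
      have h1 := ENNReal.le_sub_of_add_le_right (ENNReal.mul_ne_top ENNReal.ofReal_ne_top (rpow_ne_top' _ hc0 hctop)) step1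
      rwa [← ENNReal.sub_mul (fun _ _ => rpow_ne_top' _ hc0 hctop),
        ← ENNReal.ofReal_sub R hr'0.le] at h1
    have step3 : volume K ≤ (ENNReal.ofReal (R - r') * c ^ (n:ℝ)⁻¹) ^ (n:ℝ) := by
      have h2 := ENNReal.rpow_le_rpow step2 (by positivity : (0:ℝ) ≤ (n:ℝ))
      rwa [← ENNReal.rpow_mul, inv_mul_cancel₀ (by exact_mod_cast hn0.ne' : (n:ℝ) ≠ 0),
        ENNReal.rpow_one] at h2
    calc volume K ≤ (ENNReal.ofReal (R - r') * c ^ (n:ℝ)⁻¹) ^ (n:ℝ) := step3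
      _ = ENNReal.ofReal ((R - r') ^ n) * c := by
          rw [ENNReal.mul_rpow_of_ne_top ENNReal.ofReal_ne_top (rpow_ne_top' _ hc0 hctop),
            ← ENNReal.rpow_mul, inv_mul_cancel₀ (by exact_mod_cast hn0.ne' : (n:ℝ) ≠ 0),
            ENNReal.rpow_one, ENNReal.ofReal_rpow_of_nonneg (by linarith) (by positivity),
            ← Real.rpow_natCast (R - r') n]
  -- from compact subsets to T, for each r'
  have boundT : ∀ r' : ℝ, 0 < r' → r' < r →
      volume T ≤ ENNReal.ofReal ((R - r') ^ n) * c := by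
    intro r' hr'0 hr'r
    apply ENNReal.le_of_forall_pos_le_add
    intro ε hε _
    obtain ⟨K, hKT, hKc, hKlt⟩ := hTm.exists_isCompact_lt_add hvolTfin
      (by exact_mod_cast hε.ne' : (ε : ℝ≥0∞) ≠ 0)
    calc volume T ≤ volume K + ε := hKlt.le
      _ ≤ ENNReal.ofReal ((R - r') ^ n) * c + ε := by
          gcongr
          exact keybound r' hr'0 hr'r K hKc hKT
  -- let r' → r
  have limbound : volume T ≤ ENNReal.ofReal ((R - r) ^ n) * c := by
    have htend : Tendsto (fun r' : ℝ => ENNReal.ofReal ((R - r') ^ n) * c)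
        (nhdsWithin r (Iio r)) (nhds (ENNReal.ofReal ((R - r) ^ n) * c)) := by
      apply ENNReal.Tendsto.mul_const _ (Or.inr hctop)
      have hcont : Continuous fun r' : ℝ => ENNReal.ofReal ((R - r') ^ n) := by
        apply ENNReal.continuous_ofReal.comp
        continuity
      exact (hcont.tendsto r).mono_left nhdsWithin_le_nhds
    apply ge_of_tendsto htend
    have hmem : Ioo 0 r ∈ nhdsWithin r (Iio r) := Ioo_mem_nhdsLT_of_mem ⟨hr, le_refl r⟩
    filter_upwards [hmem] with r' hr'
    exact boundT r' hr'.1 hr'.2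
  -- conclude
  have hfinal : volume (ball (0 : EuclideanSpace ℝ (Fin n)) (R - r))
      = ENNReal.ofReal ((R - r) ^ n) * c := by
    rw [Measure.addHaar_ball volume _ (by linarith : (0:ℝ) ≤ R - r), hrank]
  calc volume (minkSub n r E) = volume T := hvolT.symm
    _ ≤ ENNReal.ofReal ((R - r) ^ n) * c := limbound
    _ = volume (ball (0 : EuclideanSpace ℝ (Fin n)) (R - r)) := hfinal.symm
end
end

section
/- Riesz energy is Lipschitz with respect to symmetric difference with balls: there exists a constant C(n,α) > 0, depending only on n and α ∈ (0,n), such that for every measurable set E ⊆ ℝⁿ with |E| = 1 and every z ∈ ℝⁿ, one has |Φ_α(B(z)) − Φ_α(E)| ≤ C(n,α) · |E Δ B(z)|, where B(z) is the ball of volume 1 centered at z. -/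
open MeasureTheory Metric Set Filter Bornology
open scoped ENNReal NNReal Pointwise

noncomputable section

/-!
Since `α < n` the kernel `|x - y|^{-α}` is locally integrable, and cutting it at distance one
gives `∫_G |x - y|^{-α} dy ≤ ∫_{B_1(0)} |y|^{-α} dy + |G|` uniformly in `x`. Passing from `A` to
`B` changes the double integral only on pairs with a coordinate in `A \ B`; by the symmetry of the
kernel each of the two such strips costs at most this uniform bound times `|A \ B|`.
-/

section Kernel

variable {X : Type*} [MeasurableSpace X] {μ : Measure X} [SFinite μ] {k : X → X → ℝ≥0∞}

theorem setLIntegral_setLIntegral_le_add_mul_measure_diff (hk : Measurable (Function.uncurry k))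
    (hk_symm : ∀ x y, k x y = k y x) {A B : Set X} {M : ℝ≥0∞}
    (hM : ∀ x, ∫⁻ y in A, k x y ∂μ ≤ M) :
    ∫⁻ x in A, ∫⁻ y in A, k x y ∂μ ∂μ ≤
      ∫⁻ x in B, ∫⁻ y in B, k x y ∂μ ∂μ + 2 * M * μ (A \ B) := by
  have hsplit (f : X → ℝ≥0∞) :
      ∫⁻ x in A, f x ∂μ ≤ ∫⁻ x in A ∩ B, f x ∂μ + ∫⁻ x in A \ B, f x ∂μ :=
    (lintegral_mono_set (inter_union_sdiff A B).ge).trans (lintegral_union_le f _ _)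
  have hcommon : ∫⁻ x in A ∩ B, ∫⁻ y in A ∩ B, k x y ∂μ ∂μ ≤
      ∫⁻ x in B, ∫⁻ y in B, k x y ∂μ ∂μ :=
    (lintegral_mono fun x => lintegral_mono_set inter_subset_right).trans
      (lintegral_mono_set inter_subset_right)
  have hdiff : ∫⁻ x in A \ B, ∫⁻ y in A, k x y ∂μ ∂μ ≤ M * μ (A \ B) :=
    (setLIntegral_mono measurable_const fun x _ => hM x).trans_eq (setLIntegral_const _ _)
  have hcross : ∫⁻ x in A ∩ B, ∫⁻ y in A \ B, k x y ∂μ ∂μ ≤ M * μ (A \ B) := by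
    rw [lintegral_lintegral_swap hk.aemeasurable]
    exact (lintegral_mono fun y => (lintegral_congr fun x => hk_symm x y).trans_le
      (lintegral_mono_set inter_subset_left)).trans hdiff
  have hmeas : Measurable fun x => ∫⁻ y in A ∩ B, k x y ∂μ := hk.lintegral_prod_right'
  calc ∫⁻ x in A, ∫⁻ y in A, k x y ∂μ ∂μ
      ≤ ∫⁻ x in A ∩ B, ∫⁻ y in A, k x y ∂μ ∂μ + ∫⁻ x in A \ B, ∫⁻ y in A, k x y ∂μ ∂μ :=
        hsplit _
    _ ≤ ∫⁻ x in A ∩ B, (∫⁻ y in A ∩ B, k x y ∂μ + ∫⁻ y in A \ B, k x y ∂μ) ∂μ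
          + M * μ (A \ B) :=
        add_le_add (lintegral_mono fun x => hsplit _) hdiff
    _ = ∫⁻ x in A ∩ B, ∫⁻ y in A ∩ B, k x y ∂μ ∂μ
          + ∫⁻ x in A ∩ B, ∫⁻ y in A \ B, k x y ∂μ ∂μ + M * μ (A \ B) := by
        rw [lintegral_add_left hmeas]
    _ ≤ ∫⁻ x in B, ∫⁻ y in B, k x y ∂μ ∂μ + M * μ (A \ B) + M * μ (A \ B) := by
        gcongr
    _ = ∫⁻ x in B, ∫⁻ y in B, k x y ∂μ ∂μ + 2 * M * μ (A \ B) := by ring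

end Kernel

section RieszKernel

variable {E : Type*} [NormedAddCommGroup E] {α : ℝ}

theorem enorm_rpow_neg_le_indicator_add_one (hα : 0 ≤ α) (v : E) :
    ‖v‖ₑ ^ (-α) ≤ (ball (0 : E) 1).indicator (fun w => ‖w‖ₑ ^ (-α)) v + 1 := by
  by_cases hv : v ∈ ball (0 : E) 1
  · simp only [indicator_of_mem hv, le_self_add]
  · have h1 : 1 ≤ ‖v‖ₑ := by
      rw [← ofReal_norm, ENNReal.one_le_ofReal]
      simpa using hv
    simpa [indicator_of_notMem hv] using
      ENNReal.rpow_le_rpow_of_exponent_le h1 (neg_nonpos.2 hα)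

variable [MeasurableSpace E] [BorelSpace E] {μ : Measure E}

theorem setLIntegral_edist_rpow_neg_le [μ.IsAddRightInvariant] (hα : 0 ≤ α) (x : E) (G : Set E) :
    ∫⁻ y in G, edist x y ^ (-α) ∂μ ≤ ∫⁻ y in ball 0 1, ‖y‖ₑ ^ (-α) ∂μ + μ G := by
  set φ := (ball (0 : E) 1).indicator fun w => ‖w‖ₑ ^ (-α)
  calc ∫⁻ y in G, edist x y ^ (-α) ∂μ
      ≤ ∫⁻ y in G, (φ (y - x) + 1) ∂μ := by
        refine lintegral_mono fun y => ?_
        rw [edist_comm, edist_eq_enorm_sub]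
        exact enorm_rpow_neg_le_indicator_add_one hα _
    _ = ∫⁻ y in G, φ (y - x) ∂μ + μ G := by
        rw [lintegral_add_right _ measurable_const, setLIntegral_one]
    _ ≤ ∫⁻ y, φ (y - x) ∂μ + μ G := by gcongr; exact Measure.restrict_le_self
    _ = ∫⁻ y in ball 0 1, ‖y‖ₑ ^ (-α) ∂μ + μ G := by
        rw [lintegral_sub_right_eq_self φ x, lintegral_indicator measurableSet_ball]

theorem setLIntegral_ball_enorm_rpow_neg_lt_top [NormedSpace ℝ E] [FiniteDimensional ℝ E]
    [μ.IsAddHaarMeasure] (hd : 1 ≤ Module.finrank ℝ E)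
    (hα : α < Module.finrank ℝ E) (r : ℝ) :
    ∫⁻ y in ball 0 r, ‖y‖ₑ ^ (-α) ∂μ < ⊤ := by
  have : Nontrivial E := Module.nontrivial_of_finrank_pos (R := ℝ) hd
  have hint : IntegrableOn (fun y : E => ‖y‖ ^ (-α)) (ball 0 r) μ :=
    integrableOn_ball_of_norm_le_rpow (C := 1) hd hα
      (ae_of_all _ fun y => by simp [abs_of_nonneg, Real.rpow_nonneg])
      (measurable_norm.pow_const _).aestronglyMeasurable
  refine lt_of_eq_of_lt (lintegral_congr_ae ?_) hint.2
  have hne : ∀ᵐ y ∂μ, y ≠ 0 := compl_mem_ae_iff.2 (measure_singleton 0)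
  filter_upwards [ae_restrict_of_ae hne] with y hy
  rw [Real.enorm_of_nonneg (Real.rpow_nonneg (norm_nonneg y) _),
    ← ENNReal.ofReal_rpow_of_pos (norm_pos_iff.2 hy), ofReal_norm]

end RieszKernel

theorem rieszEnergy_le_add_mul_measure_diff {n : ℕ} {α : ℝ} (hα : 0 ≤ α)
    (A B : Set (EuclideanSpace ℝ (Fin n))) :
    rieszEnergy n α A ≤ rieszEnergy n α B + 2 *
      ((∫⁻ y in ball (0 : EuclideanSpace ℝ (Fin n)) 1, ‖y‖ₑ ^ (-α)) + volume A) * volume (A \ B) :=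
  setLIntegral_setLIntegral_le_add_mul_measure_diff (measurable_edist.pow_const _)
    (fun x y => by rw [edist_comm])
    (fun x => setLIntegral_edist_rpow_neg_le (μ := volume) hα x A)

theorem volume_ball_unitRadius {n : ℕ} (hn : n ≠ 0) (z : EuclideanSpace ℝ (Fin n)) :
    volume (ball z (unitRadius n)) = 1 := by
  set v := volume (ball (0 : EuclideanSpace ℝ (Fin n)) 1)
  have hv0 : v ≠ 0 := (measure_ball_pos _ _ one_pos).ne'
  have hv : v ≠ ⊤ := measure_ball_lt_top.ne
  have hv_pos : 0 < v.toReal := ENNReal.toReal_pos hv0 hv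
  have hpow : unitRadius n ^ n = v.toReal⁻¹ := by
    rw [unitRadius, ← Real.rpow_natCast, ← Real.rpow_mul ENNReal.toReal_nonneg,
      neg_mul, inv_mul_cancel₀ (Nat.cast_ne_zero.2 hn), Real.rpow_neg_one]
  have hr : 0 < unitRadius n := Real.rpow_pos_of_pos hv_pos _
  rw [Measure.addHaar_ball_of_pos _ _ hr,
    finrank_euclideanSpace_fin, hpow, ENNReal.ofReal_inv_of_pos hv_pos,
    ENNReal.ofReal_toReal hv, ENNReal.inv_mul_cancel hv0 hv]

/-- The Riesz energy is Lipschitz with respect to the symmetric difference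
with unit-volume balls. -/
theorem rieszEnergy_lipschitz_symmDiff (n : ℕ) (hn : 1 ≤ n) (α : ℝ) (hα : 0 < α)
    (hαn : α < n) :
    ∃ C : ℝ, 0 < C ∧
      ∀ (E : Set (EuclideanSpace ℝ (Fin n))) (z : EuclideanSpace ℝ (Fin n)),
        MeasurableSet E → volume E = 1 →
        rieszEnergy n α (ball z (unitRadius n)) ≤
            rieszEnergy n α E +
              ENNReal.ofReal C * volume (symmDiff E (ball z (unitRadius n))) ∧
        rieszEnergy n α E ≤
            rieszEnergy n α (ball z (unitRadius n)) +
              ENNReal.ofReal C * volume (symmDiff E (ball z (unitRadius n))) := by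
  set K := ∫⁻ y in ball (0 : EuclideanSpace ℝ (Fin n)) 1, ‖y‖ₑ ^ (-α)
  have hK : K ≠ ⊤ := (setLIntegral_ball_enorm_rpow_neg_lt_top
    (by rwa [finrank_euclideanSpace_fin]) (by rwa [finrank_euclideanSpace_fin]) 1).ne
  have hC : ENNReal.ofReal (2 * (K.toReal + 1)) = 2 * (K + 1) := by
    rw [ENNReal.ofReal_mul zero_le_two, ENNReal.ofReal_add ENNReal.toReal_nonneg zero_le_one,
      ENNReal.ofReal_toReal hK, ENNReal.ofReal_ofNat, ENNReal.ofReal_one]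
  refine ⟨2 * (K.toReal + 1), by positivity, fun E z _ hE => ?_⟩
  have hball := volume_ball_unitRadius (by omega) z
  constructor
  · refine (rieszEnergy_le_add_mul_measure_diff hα.le _ E).trans ?_
    rw [hball, hC]
    gcongr
    exact subset_union_right
  · refine (rieszEnergy_le_add_mul_measure_diff hα.le E (ball z (unitRadius n))).trans ?_
    rw [hE, hC]
    gcongr
    exact subset_union_left
end
end
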